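/- Let B be a real p×q matrix and n ≥ 1. If x ∈ ℝ^p and y ∈ ℝ^q satisfy B y = λ x and Bᵀ x = λ y (i.e., (x,y) is an eigenvector of the block matrix [[0, B],[Bᵀ, 0]] with eigenvalue λ), then the vector w indexed by Fin q ⊕ (Fin n × Fin p), with w(inl j) = √n · y j and w(inr (k,i)) = x i for all k, satisfies D · w = (√n · λ) · w. -/

import Mathlib

/-!
In block form `D = [[0, R], [Rᵀ, 0]]` with `R = [Bᵀ ⋯ Bᵀ]`. Applied to `(√n·y, x, …, x)`, the
top block adds up `n` copies of `Bᵀx = λy` and the other blocks each give `√n·By = √n·λx`;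
the factor `√n` on `y` is what makes both rows scale by the same `√n·λ`.
-/

open Matrix

/-- The matrix `D` of Construction I: indexed by `Fin q ⊕ (Fin n × Fin p)`,
first block row `[0, Bᵀ, Bᵀ, …, Bᵀ]`, first block column its transpose, other blocks zero. -/
def matD (p q n : ℕ) (B : Matrix (Fin p) (Fin q) ℝ) :
    Matrix (Fin q ⊕ Fin n × Fin p) (Fin q ⊕ Fin n × Fin p) ℝ :=
  Matrix.of fun a b =>
    match a, b with
    | Sum.inl j, Sum.inr (_, i) => B i j
    | Sum.inr (_, i), Sum.inl j => B i j
    | _, _ => 0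

namespace Matrix

variable {l m n κ α : Type*} [Fintype n] [NonUnitalNonAssocSemiring α]

theorem submatrix_id_mulVec (A : Matrix m n α) (f : l → m) (v : n → α) :
    A.submatrix f id *ᵥ v = (A *ᵥ v) ∘ f :=
  rfl

theorem submatrix_id_snd_mulVec_comp_snd [Fintype κ] (A : Matrix m n α) (v : n → α) :
    A.submatrix id (Prod.snd : κ × n → n) *ᵥ (v ∘ Prod.snd) = Fintype.card κ • (A *ᵥ v) := by
  ext i
  simp [mulVec, dotProduct, Fintype.sum_prod_type]

end Matrix

theorem matD_eq_fromBlocks (p q n : ℕ) (B : Matrix (Fin p) (Fin q) ℝ) :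
    matD p q n B = fromBlocks 0 (Bᵀ.submatrix id Prod.snd) (B.submatrix Prod.snd id) 0 := by
  ext (j | ⟨k, i⟩) (j' | ⟨k', i'⟩) <;> rfl

theorem matD_eigenvector_general (p q n : ℕ) (B : Matrix (Fin p) (Fin q) ℝ)
    (x : Fin p → ℝ) (y : Fin q → ℝ) (l : ℝ)
    (hBy : B *ᵥ y = l • x) (hBTx : Bᵀ *ᵥ x = l • y) :
    matD p q n B *ᵥ Sum.elim (fun j => Real.sqrt n * y j) (fun ki => x ki.2) =
      (Real.sqrt n * l) • Sum.elim (fun j => Real.sqrt n * y j) (fun ki => x ki.2) := by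
  have hsqrt : Real.sqrt n * Real.sqrt n = n := Real.mul_self_sqrt n.cast_nonneg
  have hBsy : B *ᵥ (Real.sqrt n • y) = (Real.sqrt n * l) • x := by
    rw [mulVec_smul, hBy, smul_smul]
  rw [matD_eq_fromBlocks, fromBlocks_mulVec, Sum.elim_comp_inl, Sum.elim_comp_inr,
    show (fun ki : Fin n × Fin p => x ki.2) = x ∘ Prod.snd from rfl,
    submatrix_id_snd_mulVec_comp_snd, hBTx,
    show (fun j => Real.sqrt n * y j) = Real.sqrt n • y from rfl, submatrix_id_mulVec, hBsy]
  ext (j | ⟨k, i⟩)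
  · simp only [zero_mulVec, zero_add, Fintype.card_fin, Sum.elim_inl, Pi.smul_apply, smul_eq_mul,
      nsmul_eq_mul, Pi.mul_apply, Pi.natCast_apply]
    linear_combination -(l * y j) * hsqrt
  · simp

/-- If `(x, y)` is an eigenvector of `[[0, B], [Bᵀ, 0]]` with eigenvalue `λ`, then
`(√n·y, x, …, x)` is an eigenvector of `D` with eigenvalue `√n·λ`. -/
theorem matD_eigenvector (p q n : ℕ) (hn : 1 ≤ n) (B : Matrix (Fin p) (Fin q) ℝ)
    (x : Fin p → ℝ) (y : Fin q → ℝ) (l : ℝ)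
    (hBy : B *ᵥ y = l • x) (hBTx : Bᵀ *ᵥ x = l • y) :
    matD p q n B *ᵥ Sum.elim (fun j => Real.sqrt n * y j) (fun ki => x ki.2) =
      (Real.sqrt n * l) • Sum.elim (fun j => Real.sqrt n * y j) (fun ki => x ki.2) :=
  matD_eigenvector_general p q n B x y l hBy hBTx
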